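/- Let M be a block-diagonal complex matrix with blocks M₁,…,M_h, where M_j is the n_j×n_j cyclic companion matrix of λ^{n_j} − c_j (superdiagonal 1's and c_j in the bottom-left corner), with c_j = 1 for 1 ≤ j ≤ κ and c_j ≠ 1 for κ < j ≤ h. Then the product of the nonzero eigenvalues (with multiplicity) of I − M equals (∏_{j=1}^κ n_j)·(∏_{j=κ+1}^h (1 − c_j)). -/

import Mathlib

/-!
`I - M` is block diagonal with blocks `I - M_j`, and the product of the nonzero roots of a
product of polynomials is the product of the blockwise ones. The roots of the characteristic
polynomial of `I - M_j` are the `1 - r` for the roots `r` of `λ^{n_j} - c_j`, so its nonzero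
roots come from the `r ≠ 1`. Writing `λ^{n_j} - c_j = (λ - 1)^k q` with `q(1) ≠ 0`, their
product is `q(1)`: for `c_j = 1` we have `q = 1 + λ + ⋯ + λ^{n_j - 1}` and `q(1) = n_j`, and
otherwise `k = 0` and `q(1) = 1 - c_j`.
-/

open scoped Classical

open Polynomial Matrix

namespace Polynomial

variable {R : Type*} [CommRing R] [IsDomain R]

theorem prod_roots_filter_prod {ι : Type*} (P : R → Prop) [DecidablePred P] (s : Finset ι)
    {f : ι → R[X]} (hf : ∀ i ∈ s, f i ≠ 0) :
    ((∏ i ∈ s, f i).roots.filter P).prod = ∏ i ∈ s, ((f i).roots.filter P).prod := by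
  rw [roots_prod f s (Finset.prod_ne_zero_iff.mpr hf), Multiset.filter_bind,
    Multiset.prod_bind, Finset.prod_eq_multiset_prod]

theorem prod_sub_roots_filter_ne_of_eq_mul {p q : R[X]} {a : R} {k : ℕ}
    (hp : p = (X - C a) ^ k * q) (hq : q.Splits) (hqm : q.Monic) (hqa : ¬ q.IsRoot a) :
    ((p.roots.filter (· ≠ a)).map (a - ·)).prod = q.eval a := by
  have hroots : p.roots = k • {a} + q.roots := by
    rw [hp, roots_mul (mul_ne_zero (pow_ne_zero _ (X_sub_C_ne_zero a)) hqm.ne_zero), roots_pow,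
      roots_X_sub_C]
  have hq_ne : ∀ r ∈ q.roots, r ≠ a := fun r hr hra => hqa (hra ▸ isRoot_of_mem_roots hr)
  rw [hroots, Multiset.filter_add, Multiset.filter_eq_nil.mpr (by simp),
    Multiset.filter_eq_self.mpr hq_ne, zero_add, hq.eval_eq_prod_roots_of_monic hqm]

end Polynomial

namespace Matrix

variable {R : Type*} [CommRing R]

section OneSub

variable {n : Type*} [Fintype n] [DecidableEq n]

theorem charpoly_one_sub (A : Matrix n n R) :
    (1 - A).charpoly = (-1) ^ Fintype.card n * A.charpoly.comp (1 - X) := by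
  have hcharmatrix : charmatrix (1 - A) = -(charmatrix A).map (compRingHom (1 - X)) := by
    ext i j : 1
    by_cases hij : i = j
    · subst hij
      simp only [charmatrix_apply_eq, sub_apply, one_apply_eq, map_sub, map_one,
        coe_compRingHom, neg_apply, map_apply, sub_comp, X_comp, C_comp, neg_sub]
      ring
    · simp [hij]
  rw [charpoly, hcharmatrix, det_neg, charpoly, ← coe_compRingHom_apply, RingHom.map_det]
  rfl

theorem roots_charpoly_one_sub [IsDomain R] (A : Matrix n n R) :
    (1 - A).charpoly.roots = A.charpoly.roots.map (1 - ·) := by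
  have hne := (charpoly_monic (1 - A)).ne_zero
  have hlin : (1 - X : R[X]) = C (-1) * X + C 1 := by rw [C_neg, C_1]; ring
  rw [charpoly_one_sub, hlin] at hne ⊢
  rw [roots_mul hne, roots_pow, roots_comp_C_mul_X_add_C _ _ _ isUnit_neg_one]
  have hinv : Ring.inverse (-1 : R) = -1 := by simpa using Ring.inverse_unit (-1 : Rˣ)
  simp [hinv]

theorem prod_nonzero_roots_charpoly_one_sub [IsDomain R] (A : Matrix n n R) :
    ((1 - A).charpoly.roots.filter (· ≠ 0)).prod
      = ((A.charpoly.roots.filter (· ≠ 1)).map (1 - ·)).prod := by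
  rw [roots_charpoly_one_sub, Multiset.filter_map]
  congr 2
  exact Multiset.filter_congr fun r _ => sub_ne_zero.trans ne_comm

end OneSub

theorem charpoly_blockDiagonal' {ι : Type*} [Fintype ι] [DecidableEq ι]
    {m : ι → Type*} [∀ i, Fintype (m i)] [∀ i, DecidableEq (m i)]
    (B : ∀ i, Matrix (m i) (m i) R) :
    (blockDiagonal' B).charpoly = ∏ i, (B i).charpoly := by
  -- a block-diagonal matrix is block triangular for any order on the blocks
  let _ : LinearOrder ι := LinearOrder.lift' _ (Fintype.equivFin ι).injective
  rw [charpoly, (blockTriangular_blockDiagonal' B).charmatrix.det_fintype]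
  refine Finset.prod_congr rfl fun i _ => ?_
  have hblock : (blockDiagonal' B).toSquareBlock Sigma.fst i
      = reindex (Equiv.sigmaSubtype i).symm (Equiv.sigmaSubtype i).symm (B i) := by
    ext ⟨⟨j, p⟩, hj⟩ ⟨⟨k, q⟩, hk⟩
    dsimp only at hj hk
    subst hj hk
    simp [toSquareBlock_def]
  rw [← charmatrix_toSquareBlock, ← charpoly, hblock, charpoly_reindex]

section CyclicCompanion

def cyclicCompanion {R : Type*} [Zero R] [One R] (n : ℕ) (c : R) : Matrix (Fin n) (Fin n) R :=
  of fun p q => if (p : ℕ) + 1 = q then 1 else if (p : ℕ) = n - 1 ∧ (q : ℕ) = 0 then c else 0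

theorem det_charmatrix_cyclicCompanion_submatrix_succ_succ (m : ℕ) (c : R) :
    ((cyclicCompanion (m + 1) c).charmatrix.submatrix Fin.succ Fin.succ).det = X ^ m := by
  have hupper :
      ((cyclicCompanion (m + 1) c).charmatrix.submatrix Fin.succ Fin.succ).IsUpperTriangular := by
    intro i j (hji : (j : ℕ) < i)
    have hne : (i.succ : Fin (m + 1)) ≠ j.succ := by simp [Fin.ext_iff]; omega
    have hsucc : ¬ (i : ℕ) + 1 = j := by omega
    simp [charmatrix_apply_ne _ _ _ hne, cyclicCompanion, hsucc]
  rw [det_of_isUpperTriangular hupper]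
  simp [cyclicCompanion]

theorem det_charmatrix_cyclicCompanion_submatrix_castSucc_succ (m : ℕ) (c : R) :
    ((cyclicCompanion (m + 1) c).charmatrix.submatrix Fin.castSucc Fin.succ).det = (-1) ^ m := by
  have hlower : ((cyclicCompanion (m + 1) c).charmatrix.submatrix Fin.castSucc Fin.succ)
      |>.IsLowerTriangular := by
    intro i j (hij : (i : ℕ) < j)
    have hne : (i.castSucc : Fin (m + 1)) ≠ j.succ := by simp [Fin.ext_iff]; omega
    have hij' : ¬ (i : ℕ) = j := by omega
    simp [charmatrix_apply_ne _ _ _ hne, cyclicCompanion, hij']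
  have hdiag (i : Fin m) : (cyclicCompanion (m + 1) c).charmatrix i.castSucc i.succ = -1 := by
    simp [charmatrix_apply_ne _ _ _ (Fin.castSucc_lt_succ (i := i)).ne, cyclicCompanion]
  rw [det_of_isLowerTriangular _ hlower]
  simp [hdiag]

theorem charpoly_cyclicCompanion {n : ℕ} (hn : n ≠ 0) (c : R) :
    (cyclicCompanion n c).charpoly = X ^ n - C c := by
  obtain ⟨m, rfl⟩ := Nat.exists_eq_succ_of_ne_zero hn
  rcases Nat.eq_zero_or_pos m with rfl | hm
  · simp [charpoly, det_unique, cyclicCompanion]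
  -- Laplace expansion along column 0, where only rows 0 and `last` are nonzero
  have hlast : Fin.last m ≠ 0 := by simp [Fin.ext_iff]; omega
  have hcol (i : Fin (m + 1)) (h0 : i ≠ 0) (hl : i ≠ Fin.last m) :
      (cyclicCompanion (m + 1) c).charmatrix i 0 = 0 := by
    have : (i : ℕ) ≠ m := fun h => hl (Fin.ext h)
    simp [charmatrix_apply_ne _ _ _ h0, cyclicCompanion, this]
  rw [charpoly, det_succ_column_zero, Fintype.sum_eq_add 0 (Fin.last m) hlast.symm
    fun i ⟨h0, hl⟩ => by rw [hcol i h0 hl, mul_zero, zero_mul]]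
  rw [Fin.succAbove_zero, Fin.succAbove_last, det_charmatrix_cyclicCompanion_submatrix_succ_succ,
    det_charmatrix_cyclicCompanion_submatrix_castSucc_succ]
  have hsign : ((-1 : R[X]) ^ m) * (-1) ^ m = 1 := by rw [← mul_pow]; simp
  simp [charmatrix_apply_ne _ _ _ hlast, cyclicCompanion, hm.ne]
  linear_combination (-C c) * hsign

theorem prod_nonzero_roots_charpoly_one_sub_cyclicCompanion {K : Type*} [Field K] [IsAlgClosed K]
    [CharZero K] {n : ℕ} (hn : n ≠ 0) (c : K) :
    ((1 - cyclicCompanion n c).charpoly.roots.filter (· ≠ 0)).prod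
      = if c = 1 then (n : K) else 1 - c := by
  rw [prod_nonzero_roots_charpoly_one_sub, charpoly_cyclicCompanion hn]
  split_ifs with hc
  · subst hc
    have hgeom : (X ^ n - C 1 : K[X]) = (X - C 1) ^ 1 * ∑ i ∈ Finset.range n, X ^ i := by
      rw [pow_one, mul_comm, C_1, geom_sum_mul]
    rw [prod_sub_roots_filter_ne_of_eq_mul hgeom (IsAlgClosed.splits _) (monic_geom_sum_X hn)]
    all_goals simp [eval_geom_sum, hn]
  · have hroot : ¬ (X ^ n - C c).IsRoot 1 := by
      simpa [IsRoot, sub_eq_zero] using Ne.symm hc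
    rw [prod_sub_roots_filter_ne_of_eq_mul (k := 0) (by simp) (IsAlgClosed.splits _)
      (monic_X_pow_sub_C c hn) hroot]
    simp

end CyclicCompanion

end Matrix

theorem det_prime_one_sub_block_companion_general
    (h κ : ℕ)
    (n : Fin h → ℕ) (hn : ∀ j, 1 ≤ n j)
    (c : Fin h → ℂ)
    (hc1 : ∀ j : Fin h, c j = 1 ↔ (j : ℕ) < κ)
    (M : Matrix ((j : Fin h) × Fin (n j)) ((j : Fin h) × Fin (n j)) ℂ)
    (hM : ∀ p q : (j : Fin h) × Fin (n j),
      M p q = if p.1 = q.1 then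
          (if (p.2 : ℕ) + 1 = (q.2 : ℕ) then 1
            else if (p.2 : ℕ) = n p.1 - 1 ∧ (q.2 : ℕ) = 0 then c p.1 else 0)
        else 0) :
    (((1 - M).charpoly.roots.filter (fun z => z ≠ 0)).prod)
      = (∏ j ∈ Finset.univ.filter (fun j : Fin h => (j : ℕ) < κ), (n j : ℂ))
        * ∏ j ∈ Finset.univ.filter (fun j : Fin h => κ ≤ (j : ℕ)), (1 - c j) := by
  have hblocks : M = blockDiagonal' fun j => cyclicCompanion (n j) (c j) := by
    ext ⟨j, p⟩ ⟨k, q⟩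
    rw [hM, blockDiagonal'_apply]
    by_cases hjk : j = k
    · subst hjk
      simp [cyclicCompanion]
    · simp [hjk]
  have hone_sub : 1 - M = blockDiagonal' fun j => 1 - cyclicCompanion (n j) (c j) := by
    rw [hblocks, ← blockDiagonal'_one, ← blockDiagonal'_sub]
    rfl
  rw [hone_sub, charpoly_blockDiagonal',
    prod_roots_filter_prod _ _ fun j _ => (charpoly_monic _).ne_zero]
  simp_rw [prod_nonzero_roots_charpoly_one_sub_cyclicCompanion (Nat.one_le_iff_ne_zero.mp (hn _)),
    hc1]
  rw [Finset.prod_ite]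
  simp [not_lt]

/-- **Product of nonzero eigenvalues of `I − π(S̃∞)`.**
Let `M` be block diagonal with cyclic companion blocks of `λ^{n_j} − c_j`, where
`|c_j| = 1`, `c_j = 1` exactly for `j < κ`.  Then the product of the nonzero
roots (with multiplicity) of the characteristic polynomial of `I − M` equals
`(∏_{j<κ} n_j)·(∏_{j≥κ} (1 − c_j))`. -/
theorem det_prime_one_sub_block_companion
    (h κ : ℕ) (hκ : κ ≤ h)
    (n : Fin h → ℕ) (hn : ∀ j, 1 ≤ n j)
    (c : Fin h → ℂ) (hc : ∀ j, ‖c j‖ = 1)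
    (hc1 : ∀ j : Fin h, c j = 1 ↔ (j : ℕ) < κ)
    (M : Matrix ((j : Fin h) × Fin (n j)) ((j : Fin h) × Fin (n j)) ℂ)
    (hM : ∀ p q : (j : Fin h) × Fin (n j),
      M p q = if p.1 = q.1 then
          (if (p.2 : ℕ) + 1 = (q.2 : ℕ) then 1
            else if (p.2 : ℕ) = n p.1 - 1 ∧ (q.2 : ℕ) = 0 then c p.1 else 0)
        else 0) :
    (((1 - M).charpoly.roots.filter (fun z => z ≠ 0)).prod)
      = (∏ j ∈ Finset.univ.filter (fun j : Fin h => (j : ℕ) < κ), (n j : ℂ))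
        * ∏ j ∈ Finset.univ.filter (fun j : Fin h => κ ≤ (j : ℕ)), (1 - c j) :=
  det_prime_one_sub_block_companion_general h κ n hn c hc1 M hM
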